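/- Subtyping inversion for function types: in CC, if Γ ⊢ U <: C ∀(x:T₁)T₂ is derivable, then either U is of the form C' X for a type variable X with Γ ⊢ C' <: C and Γ ⊢ X <: ∀(x:T₁)T₂, or U is of the form C' ∀(x:U₁)U₂ with Γ ⊢ C' <: C, Γ ⊢ T₁ <: U₁, and Γ,x:T₁ ⊢ U₂ <: T₂. -/

import Mathlib

namespace CC

/-- Term variables. -/
abbrev Var := ℕ
/-- Type variables. -/
abbrev TVar := ℕ

/-- Elements of capture sets: term variables or the universal capability `*`. -/
inductive CapElem where
  | star : CapElem
  | cvar : Var → CapElem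
deriving DecidableEq

/-- Capture sets: finite sets of variables, possibly containing `*`. -/
abbrev CaptureSet := Finset CapElem

/-- Rename variable `x` to `y` in a capture set. -/
def CaptureSet.rename (C : CaptureSet) (x y : Var) : CaptureSet :=
  C.image (fun e => if e = .cvar x then .cvar y else e)

/-- Substitute the capture set `D` for the variable `x` in a capture set. -/
def CaptureSet.csubst (C : CaptureSet) (x : Var) (D : CaptureSet) : CaptureSet :=
  if CapElem.cvar x ∈ C then (C.erase (.cvar x)) ∪ D else C

/-- The term variables occurring in a capture set. -/
def CaptureSet.fv (C : CaptureSet) : Finset Var :=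
  C.biUnion (fun e => match e with | .cvar x => {x} | .star => ∅)

mutual
/-- Shape types of CC. -/
inductive ShapeTy where
  | tvar : TVar → ShapeTy                      -- X
  | top : ShapeTy                              -- ⊤
  | arrow : Var → Ty → Ty → ShapeTy            -- ∀(x : U) T
  | tarrow : TVar → ShapeTy → Ty → ShapeTy     -- ∀[X <: S] T
  | boxed : Ty → ShapeTy                       -- □ T
/-- Types of CC: capturing types `C S`; a shape type `S` is identified with `{} S`. -/
inductive Ty where
  | capt : CaptureSet → ShapeTy → Ty
end

/-- A shape type seen as a (pure) type: `S ≡ {} S`. -/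
def ShapeTy.asTy (S : ShapeTy) : Ty := .capt ∅ S

/-- The capture set of a type. -/
def Ty.cv : Ty → CaptureSet
  | .capt C _ => C

mutual
/-- Rename term variable `x` to `y` in a shape type. -/
def ShapeTy.rename : ShapeTy → Var → Var → ShapeTy
  | .tvar X, _, _ => .tvar X
  | .top, _, _ => .top
  | .arrow z U T, x, y =>
      .arrow z (U.rename x y) (if z = x then T else T.rename x y)
  | .tarrow X S T, x, y => .tarrow X (S.rename x y) (T.rename x y)
  | .boxed T, x, y => .boxed (T.rename x y)
/-- Rename term variable `x` to `y` in a type. -/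
def Ty.rename : Ty → Var → Var → Ty
  | .capt C S, x, y => .capt (C.rename x y) (S.rename x y)
end

mutual
/-- Substitute capture set `D` for term variable `x` in a shape type. -/
def ShapeTy.csubst : ShapeTy → Var → CaptureSet → ShapeTy
  | .tvar X, _, _ => .tvar X
  | .top, _, _ => .top
  | .arrow z U T, x, D =>
      .arrow z (U.csubst x D) (if z = x then T else T.csubst x D)
  | .tarrow X S T, x, D => .tarrow X (S.csubst x D) (T.csubst x D)
  | .boxed T, x, D => .boxed (T.csubst x D)
/-- Substitute capture set `D` for term variable `x` in a type. -/
def Ty.csubst : Ty → Var → CaptureSet → Ty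
  | .capt C S, x, D => .capt (C.csubst x D) (S.csubst x D)
end

mutual
/-- Substitute the shape type `P` for the type variable `X` in a shape type. -/
def ShapeTy.tsubst : ShapeTy → TVar → ShapeTy → ShapeTy
  | .tvar Y, X, P => if Y = X then P else .tvar Y
  | .top, _, _ => .top
  | .arrow z U T, X, P => .arrow z (U.tsubst X P) (T.tsubst X P)
  | .tarrow Y S T, X, P =>
      .tarrow Y (S.tsubst X P) (if Y = X then T else T.tsubst X P)
  | .boxed T, X, P => .boxed (T.tsubst X P)
/-- Substitute the shape type `P` for the type variable `X` in a type. -/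
def Ty.tsubst : Ty → TVar → ShapeTy → Ty
  | .capt C S, X, P => .capt C (S.tsubst X P)
end

mutual
/-- Free term variables of a shape type. -/
def ShapeTy.fv : ShapeTy → Finset Var
  | .tvar _ => ∅
  | .top => ∅
  | .arrow z U T => U.fv ∪ (T.fv.erase z)
  | .tarrow _ S T => S.fv ∪ T.fv
  | .boxed T => T.fv
/-- Free term variables of a type. -/
def Ty.fv : Ty → Finset Var
  | .capt C S => C.fv ∪ S.fv
end

/-- Environment bindings: term bindings `x : T` and type bindings `X <: S`. -/
inductive Binding where
  | tm : Var → Ty → Binding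
  | tp : TVar → ShapeTy → Binding

/-- Typing environments; the head of the list is the innermost (most recent) binding,
so `Γ,Δ` is written `Δ ++ Γ` and `Γ,x:T` is written `Binding.tm x T :: Γ`. -/
abbrev Env := List Binding

/-- The term variables bound in an environment. -/
def Env.tmDom : Env → Finset Var
  | [] => ∅
  | .tm x _ :: Γ => insert x (Env.tmDom Γ)
  | .tp _ _ :: Γ => Env.tmDom Γ

/-- Well-formedness of a capture set: `C ⊆ dom(Γ) ∪ {*}`. -/
def WfCs (Γ : Env) (C : CaptureSet) : Prop :=
  ∀ e ∈ C, e = CapElem.star ∨ ∃ x : Var, e = CapElem.cvar x ∧ x ∈ Γ.tmDom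

/-- `C ⊆ dom(Γ)` (so `*` is not allowed): side condition of the box/unbox rules. -/
def CsInDom (Γ : Env) (C : CaptureSet) : Prop :=
  ∀ e ∈ C, ∃ x : Var, e = CapElem.cvar x ∧ x ∈ Γ.tmDom

mutual
/-- Well-formedness of shape types. -/
inductive WfShape : Env → ShapeTy → Prop
  | tvar : ∀ {Γ : Env} {X : TVar} {S : ShapeTy},
      Binding.tp X S ∈ Γ → WfShape Γ (.tvar X)
  | top : ∀ {Γ : Env}, WfShape Γ .top
  | arrow : ∀ {Γ : Env} {x : Var} {U T : Ty},
      WfTy Γ U → WfTy (.tm x U :: Γ) T → WfShape Γ (.arrow x U T)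
  | tarrow : ∀ {Γ : Env} {X : TVar} {S : ShapeTy} {T : Ty},
      WfShape Γ S → WfTy (.tp X S :: Γ) T → WfShape Γ (.tarrow X S T)
  | boxed : ∀ {Γ : Env} {T : Ty}, WfTy Γ T → WfShape Γ (.boxed T)
/-- Well-formedness of types. -/
inductive WfTy : Env → Ty → Prop
  | capt : ∀ {Γ : Env} {C : CaptureSet} {S : ShapeTy},
      WfCs Γ C → WfShape Γ S → WfTy Γ (.capt C S)
end

/-- The subcapturing relation `Γ ⊢ C₁ <: C₂`. -/
inductive Subcapt : Env → CaptureSet → CaptureSet → Prop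
  | elem : ∀ {Γ : Env} {e : CapElem} {C : CaptureSet},
      e ∈ C → Subcapt Γ {e} C
  | var : ∀ {Γ : Env} {x : Var} {C' : CaptureSet} {S : ShapeTy} {C : CaptureSet},
      Binding.tm x (.capt C' S) ∈ Γ → Subcapt Γ C' C →
      Subcapt Γ {CapElem.cvar x} C
  | set : ∀ {Γ : Env} {C₁ C : CaptureSet},
      (∀ e ∈ C₁, Subcapt Γ {e} C) → Subcapt Γ C₁ C

/-- The subtyping relation `Γ ⊢ T₁ <: T₂`; a shape type `S` is identified with `{} S`. -/
inductive Sub : Env → Ty → Ty → Prop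
  | refl : ∀ {Γ : Env} {T : Ty}, Sub Γ T T
  | trans : ∀ {Γ : Env} {T₁ T₂ T₃ : Ty},
      Sub Γ T₁ T₂ → Sub Γ T₂ T₃ → Sub Γ T₁ T₃
  | top : ∀ {Γ : Env} {S : ShapeTy}, Sub Γ S.asTy ShapeTy.top.asTy
  | tvar : ∀ {Γ : Env} {X : TVar} {S : ShapeTy},
      Binding.tp X S ∈ Γ → Sub Γ (ShapeTy.tvar X).asTy S.asTy
  | arrow : ∀ {Γ : Env} {x : Var} {U₁ U₂ T₁ T₂ : Ty},
      Sub Γ U₂ U₁ → Sub (.tm x U₂ :: Γ) T₁ T₂ →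
      Sub Γ (ShapeTy.arrow x U₁ T₁).asTy (ShapeTy.arrow x U₂ T₂).asTy
  | tarrow : ∀ {Γ : Env} {X : TVar} {S₁ S₂ : ShapeTy} {T₁ T₂ : Ty},
      Sub Γ S₂.asTy S₁.asTy → Sub (.tp X S₂ :: Γ) T₁ T₂ →
      Sub Γ (ShapeTy.tarrow X S₁ T₁).asTy (ShapeTy.tarrow X S₂ T₂).asTy
  | boxed : ∀ {Γ : Env} {T₁ T₂ : Ty},
      Sub Γ T₁ T₂ → Sub Γ (ShapeTy.boxed T₁).asTy (ShapeTy.boxed T₂).asTy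
  | capt : ∀ {Γ : Env} {C₁ C₂ : CaptureSet} {S₁ S₂ : ShapeTy},
      Subcapt Γ C₁ C₂ → Sub Γ S₁.asTy S₂.asTy →
      Sub Γ (.capt C₁ S₁) (.capt C₂ S₂)

/-- Terms of CC, in monadic normal form. -/
inductive Tm where
  | var : Var → Tm                          -- x
  | abs : Var → Ty → Tm → Tm                -- λ(x : T) t
  | tabs : TVar → ShapeTy → Tm → Tm         -- λ[X <: S] t
  | box : Var → Tm                          -- □ x
  | app : Var → Var → Tm                    -- x y
  | tapp : Var → ShapeTy → Tm               -- x [S]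
  | letin : Var → Tm → Tm → Tm              -- let x = s in t
  | unbox : CaptureSet → Var → Tm           -- C ∘- x

/-- Values: term abstractions, type abstractions and boxes. -/
def Tm.isValue : Tm → Bool
  | .abs _ _ _ => true
  | .tabs _ _ _ => true
  | .box _ => true
  | _ => false

/-- Answers: variables or values. -/
def Tm.isAnswer : Tm → Bool
  | .var _ => true
  | t => t.isValue

/-- The captured variables `cv(t)` of a term. -/
def Tm.cv : Tm → CaptureSet
  | .var x => {CapElem.cvar x}
  | .abs x _ t => t.cv.erase (.cvar x)
  | .tabs _ _ t => t.cv
  | .box _ => ∅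
  | .app x y => {CapElem.cvar x, CapElem.cvar y}
  | .tapp x _ => {CapElem.cvar x}
  | .letin x s t =>
      if s.isValue = true ∧ CapElem.cvar x ∉ t.cv then t.cv
      else s.cv ∪ (t.cv.erase (.cvar x))
  | .unbox C x => insert (CapElem.cvar x) C

/-- Free term variables of a term. -/
def Tm.fv : Tm → Finset Var
  | .var x => {x}
  | .abs x T t => T.fv ∪ (t.fv.erase x)
  | .tabs _ S t => S.fv ∪ t.fv
  | .box x => {x}
  | .app x y => {x, y}
  | .tapp x S => insert x S.fv
  | .letin x s t => s.fv ∪ (t.fv.erase x)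
  | .unbox C x => insert x C.fv

/-- Rename term variable `x` to `y` in a term. -/
def Tm.rename : Tm → Var → Var → Tm
  | .var z, x, y => if z = x then .var y else .var z
  | .abs z T t, x, y => .abs z (T.rename x y) (if z = x then t else t.rename x y)
  | .tabs X S t, x, y => .tabs X (S.rename x y) (t.rename x y)
  | .box z, x, y => if z = x then .box y else .box z
  | .app z w, x, y => .app (if z = x then y else z) (if w = x then y else w)
  | .tapp z S, x, y => .tapp (if z = x then y else z) (S.rename x y)
  | .letin z s t, x, y =>
      .letin z (s.rename x y) (if z = x then t else t.rename x y)
  | .unbox C z, x, y => .unbox (C.rename x y) (if z = x then y else z)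

/-- Substitute shape type `P` for type variable `X` in a term. -/
def Tm.tsubst : Tm → TVar → ShapeTy → Tm
  | .var z, _, _ => .var z
  | .abs z T t, X, P => .abs z (T.tsubst X P) (t.tsubst X P)
  | .tabs Y S t, X, P => .tabs Y (S.tsubst X P) (if Y = X then t else t.tsubst X P)
  | .box z, _, _ => .box z
  | .app z w, _, _ => .app z w
  | .tapp z S, X, P => .tapp z (S.tsubst X P)
  | .letin z s t, X, P => .letin z (s.tsubst X P) (t.tsubst X P)
  | .unbox C z, _, _ => .unbox C z

/-- The typing relation `Γ ⊢ t : T`. -/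
inductive HasType : Env → Tm → Ty → Prop
  | var : ∀ {Γ : Env} {x : Var} {C : CaptureSet} {S : ShapeTy},
      Binding.tm x (.capt C S) ∈ Γ →
      HasType Γ (.var x) (.capt {CapElem.cvar x} S)
  | sub : ∀ {Γ : Env} {t : Tm} {T U : Ty},
      HasType Γ t T → Sub Γ T U → WfTy Γ U → HasType Γ t U
  | abs : ∀ {Γ : Env} {x : Var} {U T : Ty} {t : Tm},
      HasType (.tm x U :: Γ) t T → WfTy Γ U →
      HasType Γ (.abs x U t) (.capt (t.cv.erase (.cvar x)) (.arrow x U T))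
  | tabs : ∀ {Γ : Env} {X : TVar} {S : ShapeTy} {T : Ty} {t : Tm},
      HasType (.tp X S :: Γ) t T → WfShape Γ S →
      HasType Γ (.tabs X S t) (.capt t.cv (.tarrow X S T))
  | app : ∀ {Γ : Env} {x y z : Var} {C : CaptureSet} {U T : Ty},
      HasType Γ (.var x) (.capt C (.arrow z U T)) → HasType Γ (.var y) U →
      HasType Γ (.app x y) (T.rename z y)
  | tapp : ∀ {Γ : Env} {x : Var} {X : TVar} {C : CaptureSet} {S : ShapeTy} {T : Ty},
      HasType Γ (.var x) (.capt C (.tarrow X S T)) →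
      HasType Γ (.tapp x S) (T.tsubst X S)
  | box : ∀ {Γ : Env} {x : Var} {C : CaptureSet} {S : ShapeTy},
      HasType Γ (.var x) (.capt C S) → CsInDom Γ C →
      HasType Γ (.box x) (ShapeTy.boxed (.capt C S)).asTy
  | unbox : ∀ {Γ : Env} {x : Var} {C : CaptureSet} {S : ShapeTy},
      HasType Γ (.var x) (ShapeTy.boxed (.capt C S)).asTy → CsInDom Γ C →
      HasType Γ (.unbox C x) (.capt C S)
  | letin : ∀ {Γ : Env} {x : Var} {s t : Tm} {T U : Ty},
      HasType Γ s T → HasType (.tm x T :: Γ) t U → x ∉ U.fv →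
      HasType Γ (.letin x s t) U

/-- Store contexts `σ ::= [] | let x = v in σ`, outermost binding first. -/
abbrev Store := List (Var × Tm)

/-- Plugging a term into a store context. -/
def Store.plug : Store → Tm → Tm
  | [], t => t
  | (x, v) :: σ, t => .letin x v (Store.plug σ t)

/-- A store context binds only values. -/
def Store.IsStore (σ : Store) : Prop := ∀ p ∈ σ, (p.2).isValue = true

/-- Looking up the value bound to a variable in a store (innermost binding first). -/
def Store.lookup : Store → Var → Option Tm
  | [], _ => none
  | (y, v) :: σ, x =>
      match Store.lookup σ x with
      | some w => some w
      | none => if y = x then some v else none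

/-- Evaluation contexts `e ::= [] | let x = e in t`, outermost layer first. -/
abbrev EvalCtx := List (Var × Tm)

/-- Plugging a term into an evaluation context. -/
def EvalCtx.plug : EvalCtx → Tm → Tm
  | [], s => s
  | (x, t) :: e, s => .letin x (EvalCtx.plug e s) t

/-- Small-step reduction of CC. -/
inductive Step : Tm → Tm → Prop
  | apply : ∀ {σ : Store} {e : EvalCtx} {x y z : Var} {T : Ty} {t : Tm},
      σ.IsStore → σ.lookup x = some (.abs z T t) →
      Step (σ.plug (e.plug (.app x y))) (σ.plug (e.plug (t.rename z y)))
  | tapply : ∀ {σ : Store} {e : EvalCtx} {x : Var} {X : TVar} {S' S : ShapeTy} {t : Tm},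
      σ.IsStore → σ.lookup x = some (.tabs X S' t) →
      Step (σ.plug (e.plug (.tapp x S))) (σ.plug (e.plug (t.tsubst X S)))
  | open_ : ∀ {σ : Store} {e : EvalCtx} {x y : Var} {C : CaptureSet},
      σ.IsStore → σ.lookup x = some (.box y) →
      Step (σ.plug (e.plug (.unbox C x))) (σ.plug (e.plug (.var y)))
  | rename : ∀ {σ : Store} {e : EvalCtx} {x y : Var} {t : Tm},
      σ.IsStore →
      Step (σ.plug (e.plug (.letin x (.var y) t))) (σ.plug (e.plug (t.rename x y)))
  | lift : ∀ {σ : Store} {e : EvalCtx} {x : Var} {v t : Tm},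
      σ.IsStore → e ≠ [] → v.isValue = true →
      Step (σ.plug (e.plug (.letin x v t))) (σ.plug (.letin x v (e.plug t)))

/-- Matching environment: `Γ ⊢ σ ∼ Δ`. -/
inductive Matches : Env → Store → Env → Prop
  | nil : ∀ {Γ : Env}, Matches Γ [] []
  | cons : ∀ {Γ : Env} {x : Var} {v : Tm} {T : Ty} {σ : Store} {Δ : Env},
      v.isValue = true → HasType Γ v T → x ∉ T.fv →
      Matches (.tm x T :: Γ) σ Δ →
      Matches Γ ((x, v) :: σ) (Δ ++ [Binding.tm x T])

end CC

namespace CC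

/-- All variables of a term (free variables, binders, and annotation variables). -/
def Tm.allVars : Tm → Finset Var
  | .var x => {x}
  | .abs x T t => insert x (T.fv ∪ t.allVars)
  | .tabs _ S t => S.fv ∪ t.allVars
  | .box x => {x}
  | .app x y => {x, y}
  | .tapp x S => insert x S.fv
  | .letin x s t => insert x (s.allVars ∪ t.allVars)
  | .unbox C x => insert x C.fv

/-- All variables occurring in an evaluation context. -/
def EvalCtx.vars (e : EvalCtx) : Finset Var :=
  e.foldr (fun p acc => insert p.1 (p.2.allVars ∪ acc)) ∅

/-- Evaluation context typing `Γ ⊢ e : U ⇒ T`, meaning `Γ,x:U ⊢ e[x] : T`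
for a fresh variable `x`. -/
def EvalCtxTyping (Γ : Env) (e : EvalCtx) (U T : Ty) : Prop :=
  ∀ x : Var, x ∉ Γ.tmDom → x ∉ e.vars → x ∉ U.fv → x ∉ T.fv →
    HasType (Binding.tm x U :: Γ) (e.plug (.var x)) T

/-- Substitute capture set `D` for variable `x` in a binding. -/
def Binding.csubst : Binding → Var → CaptureSet → Binding
  | .tm y T, x, D => .tm y (T.csubst x D)
  | .tp X S, x, D => .tp X (S.csubst x D)

/-- Substitute capture set `D` for variable `x` in an environment. -/
def Env.csubst (Δ : Env) (x : Var) (D : CaptureSet) : Env :=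
  Δ.map (fun b => b.csubst x D)

/-- Rename term variable `x` to `y` in a binding. -/
def Binding.rename : Binding → Var → Var → Binding
  | .tm z T, x, y => .tm z (T.rename x y)
  | .tp X S, x, y => .tp X (S.rename x y)

/-- Rename term variable `x` to `y` in an environment. -/
def Env.rename (Δ : Env) (x y : Var) : Env :=
  Δ.map (fun b => b.rename x y)

/-- Substitute shape type `P` for type variable `X` in a binding. -/
def Binding.tsubst : Binding → TVar → ShapeTy → Binding
  | .tm z T, X, P => .tm z (T.tsubst X P)
  | .tp Y S, X, P => .tp Y (S.tsubst X P)

/-- Substitute shape type `P` for type variable `X` in an environment. -/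
def Env.tsubst (Δ : Env) (X : TVar) (P : ShapeTy) : Env :=
  Δ.map (fun b => b.tsubst X P)

mutual
/-- `S.avoid x Dp Dn` replaces the variable `x` by `Dp` in covariant capture-set
positions and by `Dn` in contravariant capture-set positions of `S`. -/
def ShapeTy.avoid : ShapeTy → Var → CaptureSet → CaptureSet → ShapeTy
  | .tvar X, _, _, _ => .tvar X
  | .top, _, _, _ => .top
  | .arrow z U T, x, Dp, Dn =>
      .arrow z (U.avoid x Dn Dp) (if z = x then T else T.avoid x Dp Dn)
  | .tarrow X S T, x, Dp, Dn => .tarrow X (S.avoid x Dn Dp) (T.avoid x Dp Dn)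
  | .boxed T, x, Dp, Dn => .boxed (T.avoid x Dp Dn)
/-- `T.avoid x Dp Dn` replaces the variable `x` by `Dp` in covariant capture-set
positions and by `Dn` in contravariant capture-set positions of `T`. -/
def Ty.avoid : Ty → Var → CaptureSet → CaptureSet → Ty
  | .capt C S, x, Dp, Dn => .capt (C.csubst x Dp) (S.avoid x Dp Dn)
end

/-- `T` is the most specific (minimal w.r.t. subtyping) type of `t` in `Γ`. -/
def MostSpecificTyping (Γ : Env) (t : Tm) (T : Ty) : Prop :=
  HasType Γ t T ∧ ∀ T' : Ty, HasType Γ t T' → Sub Γ T T'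

/-- A platform: a store context binding only closed values. -/
def Platform (Ψ : Store) : Prop :=
  ∀ p ∈ Ψ, (p.2).isValue = true ∧ (p.2).fv = ∅

/-- `Ψ[t]` is a well-typed program: `Ψ` is a platform, `⊢ Ψ ∼ Δ`, `Δ ⊢ t : T`,
and every capability introduced by `Ψ` has capture set `{*}` in `Δ`. -/
def WellTypedProgram (Ψ : Store) (t : Tm) : Prop :=
  Platform Ψ ∧
  ∃ (Δ : Env) (T : Ty), Matches [] Ψ Δ ∧ HasType Δ t T ∧
    ∀ x ∈ Ψ.map Prod.fst, ∃ S : ShapeTy,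
      Binding.tm x (Ty.capt {CapElem.star} S) ∈ Δ

end CC

/-! Induction on the subtyping derivation; the only interesting case is transitivity through a
middle type `V`. If `V` is a capturing type variable `C'' Z`, everything below it is again a
capturing type variable. If `V` is an arrow `C'' ∀(x:V₁)V₂`, inverting both steps gives
`x : V₁ ⊢ U₂ <: V₂` and `x : T₁ ⊢ V₂ <: T₂`; to compose them, the first judgement is narrowed
along `T₁ <: V₁`. Narrowing holds because subcapturing and subtyping only consult the
environment through membership of bindings. -/

namespace CC

theorem Subcapt.refl (Γ : Env) (C : CaptureSet) : Subcapt Γ C C :=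
  .set fun _ he => .elem he

theorem Subcapt.singleton_of_mem {Γ : Env} {C D : CaptureSet} {e : CapElem}
    (h : Subcapt Γ C D) (he : e ∈ C) : Subcapt Γ {e} D := by
  cases h with
  | elem hmem => rw [Finset.mem_singleton.1 he]; exact .elem hmem
  | var hb hsub => rw [Finset.mem_singleton.1 he]; exact .var hb hsub
  | set hprem => exact hprem e he

theorem Subcapt.trans {Γ : Env} {C₁ C₂ C₃ : CaptureSet}
    (h₁₂ : Subcapt Γ C₁ C₂) (h₂₃ : Subcapt Γ C₂ C₃) : Subcapt Γ C₁ C₃ := by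
  induction h₁₂ with
  | elem hmem => exact h₂₃.singleton_of_mem hmem
  | var hb _ ih => exact .var hb (ih h₂₃)
  | set _ ih => exact .set fun e he => ih e he h₂₃

theorem Subcapt.mono {Γ Γ' : Env} {C D : CaptureSet} (h : Subcapt Γ C D) (hΓ : Γ ⊆ Γ') :
    Subcapt Γ' C D := by
  induction h with
  | elem hmem => exact .elem hmem
  | var hb _ ih => exact .var (hΓ hb) ih
  | set _ ih => exact .set ih

theorem Sub.subcapt_cv {Γ : Env} {T₁ T₂ : Ty} (h : Sub Γ T₁ T₂) : Subcapt Γ T₁.cv T₂.cv := by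
  induction h with
  | trans _ _ ih₁ ih₂ => exact ih₁.trans ih₂
  | capt hc _ => exact hc
  | _ => exact Subcapt.refl _ _

def Env.Narrows (Γ' Γ : Env) : Prop :=
  (∀ X S, Binding.tp X S ∈ Γ → Binding.tp X S ∈ Γ') ∧
  ∀ x C S, Binding.tm x (.capt C S) ∈ Γ →
    ∃ C' S', Binding.tm x (.capt C' S') ∈ Γ' ∧ Subcapt Γ' C' C

theorem Env.Narrows.cons {Γ' Γ : Env} (h : Γ'.Narrows Γ) (b : Binding) :
    Env.Narrows (b :: Γ') (b :: Γ) := by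
  have hsub : Γ' ⊆ b :: Γ' := List.subset_cons_self b Γ'
  refine ⟨fun X S hX => ?_, fun x C S hx => ?_⟩
  · rcases List.mem_cons.1 hX with rfl | hX
    · exact List.mem_cons_self
    · exact hsub (h.1 X S hX)
  · rcases List.mem_cons.1 hx with rfl | hx
    · exact ⟨C, S, List.mem_cons_self, Subcapt.refl _ _⟩
    · obtain ⟨C', S', hx', hC'⟩ := h.2 x C S hx
      exact ⟨C', S', hsub hx', hC'.mono hsub⟩

theorem Env.narrows_tm_cons {Γ : Env} {x : Var} {T' T : Ty} (h : Sub Γ T' T) :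
    Env.Narrows (.tm x T' :: Γ) (.tm x T :: Γ) := by
  have hsub : Γ ⊆ .tm x T' :: Γ := List.subset_cons_self _ Γ
  refine ⟨fun X S hX => ?_, fun y C S hy => ?_⟩
  · rcases List.mem_cons.1 hX with hX | hX
    · cases hX
    · exact hsub hX
  · obtain ⟨C', S'⟩ := T'
    rcases List.mem_cons.1 hy with hy | hy
    · cases hy
      exact ⟨C', S', List.mem_cons_self, h.subcapt_cv.mono hsub⟩
    · exact ⟨C, S, hsub hy, Subcapt.refl _ _⟩

theorem Subcapt.narrow {Γ Γ' : Env} {C D : CaptureSet} (h : Subcapt Γ C D)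
    (hΓ : Γ'.Narrows Γ) : Subcapt Γ' C D := by
  induction h with
  | elem hmem => exact .elem hmem
  | var hb _ ih =>
    obtain ⟨C', S', hb', hC'⟩ := hΓ.2 _ _ _ hb
    exact .var hb' (hC'.trans ih)
  | set _ ih => exact .set ih

theorem Sub.narrow {Γ Γ' : Env} {T₁ T₂ : Ty} (h : Sub Γ T₁ T₂) (hΓ : Γ'.Narrows Γ) :
    Sub Γ' T₁ T₂ := by
  induction h generalizing Γ' with
  | refl => exact .refl
  | trans _ _ ih₁ ih₂ => exact .trans (ih₁ hΓ) (ih₂ hΓ)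
  | top => exact .top
  | tvar hb => exact .tvar (hΓ.1 _ _ hb)
  | arrow _ _ ih₁ ih₂ => exact .arrow (ih₁ hΓ) (ih₂ (hΓ.cons _))
  | tarrow _ _ ih₁ ih₂ => exact .tarrow (ih₁ hΓ) (ih₂ (hΓ.cons _))
  | boxed _ ih => exact .boxed (ih hΓ)
  | capt hc _ ih => exact .capt (hc.narrow hΓ) (ih hΓ)

theorem Sub.inv_tvar {Γ : Env} {U : Ty} {C : CaptureSet} {X : TVar}
    (h : Sub Γ U (.capt C (.tvar X))) :
    ∃ C' Y, U = .capt C' (.tvar Y) ∧ Subcapt Γ C' C ∧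
      Sub Γ (ShapeTy.tvar Y).asTy (ShapeTy.tvar X).asTy := by
  generalize hV : Ty.capt C (.tvar X) = V at h
  induction h generalizing C X with
  | refl => subst hV; exact ⟨C, X, rfl, Subcapt.refl _ _, .refl⟩
  | trans _ _ ih₁ ih₂ =>
    obtain ⟨C'', Z, rfl, hc, hZ⟩ := ih₂ hV
    obtain ⟨C', Y, rfl, hc', hY⟩ := ih₁ rfl
    exact ⟨C', Y, rfl, hc'.trans hc, hY.trans hZ⟩
  | tvar hb => cases hV; exact ⟨∅, _, rfl, Subcapt.refl _ _, .tvar hb⟩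
  | capt hc _ ih =>
    cases hV
    obtain ⟨C', Y, hU, -, hY⟩ := ih rfl
    cases hU
    exact ⟨_, Y, rfl, hc, hY⟩
  | _ => cases hV

end CC

/-- Subtyping inversion for function types: if
`Γ ⊢ U <: C ∀(x:T₁)T₂`, then `U` is either `C' X` with `Γ ⊢ C' <: C` and
`Γ ⊢ X <: ∀(x:T₁)T₂`, or `C' ∀(x:U₁)U₂` with `Γ ⊢ C' <: C`, `Γ ⊢ T₁ <: U₁`
and `Γ,x:T₁ ⊢ U₂ <: T₂`. -/
theorem CC.sub_inversion_fun (Γ : CC.Env) (U : CC.Ty) (C : CC.CaptureSet)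
    (x : CC.Var) (T₁ T₂ : CC.Ty)
    (hsub : CC.Sub Γ U (.capt C (.arrow x T₁ T₂))) :
    (∃ (C' : CC.CaptureSet) (X : CC.TVar),
      U = .capt C' (.tvar X) ∧ CC.Subcapt Γ C' C ∧
      CC.Sub Γ (CC.ShapeTy.tvar X).asTy (CC.ShapeTy.arrow x T₁ T₂).asTy) ∨
    (∃ (C' : CC.CaptureSet) (U₁ U₂ : CC.Ty),
      U = .capt C' (.arrow x U₁ U₂) ∧ CC.Subcapt Γ C' C ∧
      CC.Sub Γ T₁ U₁ ∧ CC.Sub (CC.Binding.tm x T₁ :: Γ) U₂ T₂) := by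
  generalize hV : Ty.capt C (.arrow x T₁ T₂) = V at hsub
  induction hsub generalizing C x T₁ T₂ with
  | refl => subst hV; exact .inr ⟨C, T₁, T₂, rfl, Subcapt.refl _ _, .refl, .refl⟩
  | trans hUV _ ih₁ ih₂ =>
    rcases ih₂ _ _ _ _ hV with ⟨C'', Z, rfl, hc, hZ⟩ | ⟨C'', V₁, V₂, rfl, hc, hV₁, hV₂⟩
    · obtain ⟨C', Y, rfl, hc', hY⟩ := hUV.inv_tvar
      exact .inl ⟨C', Y, rfl, hc'.trans hc, hY.trans hZ⟩
    · rcases ih₁ _ _ _ _ rfl with ⟨C', Y, rfl, hc', hY⟩ | ⟨C', U₁, U₂, rfl, hc', hU₁, hU₂⟩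
      · exact .inl ⟨C', Y, rfl, hc'.trans hc, hY.trans (.arrow hV₁ hV₂)⟩
      · exact .inr ⟨C', U₁, U₂, rfl, hc'.trans hc, hV₁.trans hU₁,
          (hU₂.narrow (Env.narrows_tm_cons hV₁)).trans hV₂⟩
  | tvar hb => cases hV; exact .inl ⟨∅, _, rfl, Subcapt.refl _ _, .tvar hb⟩
  | arrow h₁ h₂ => cases hV; exact .inr ⟨∅, _, _, rfl, Subcapt.refl _ _, h₁, h₂⟩
  | capt hc _ ih =>
    cases hV
    rcases ih _ _ _ _ rfl with ⟨C', Y, hU, -, hY⟩ | ⟨C', U₁, U₂, hU, -, hU₁, hU₂⟩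
    · cases hU; exact .inl ⟨_, Y, rfl, hc, hY⟩
    · cases hU; exact .inr ⟨_, U₁, U₂, rfl, hc, hU₁, hU₂⟩
  | _ => cases hV
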